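/- arXiv:math-ph/0508051 — 7 statements merged into one kernel-verified Lean document; each statement's English description precedes it below -/
import Mathlib

section
/- Let S be a real 2n×2n symplectic matrix with det(S − I) ≠ 0. Then the symplectic Cayley transform M_S = (1/2)·J·(S + I)·(S − I)⁻¹ is a symmetric matrix, i.e. M_S = M_Sᵀ. -/
open Matrix

/-- The standard symplectic matrix `J = [[0, I], [-I, 0]]` (in `n × n` blocks). -/
noncomputable def stdJ (n : ℕ) : Matrix (Fin n ⊕ Fin n) (Fin n ⊕ Fin n) ℝ :=
  Matrix.fromBlocks 0 1 (-1) 0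

/-- A real `2n × 2n` matrix is symplectic if `Sᵀ J S = J`. -/
def IsSymplectic {n : ℕ} (S : Matrix (Fin n ⊕ Fin n) (Fin n ⊕ Fin n) ℝ) : Prop :=
  Sᵀ * stdJ n * S = stdJ n

/-- The symplectic Cayley transform `M_S = (1/2) J (S + I) (S - I)⁻¹`. -/
noncomputable def cayley {n : ℕ} (S : Matrix (Fin n ⊕ Fin n) (Fin n ⊕ Fin n) ℝ) :
    Matrix (Fin n ⊕ Fin n) (Fin n ⊕ Fin n) ℝ :=
  ((1 : ℝ) / 2) • (stdJ n * (S + 1) * (S - 1)⁻¹)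

theorem cayley_symmetric {n : ℕ} (S : Matrix (Fin n ⊕ Fin n) (Fin n ⊕ Fin n) ℝ)
    (hS : IsSymplectic S) (h : (S - 1).det ≠ 0) :
    cayley S = (cayley S)ᵀ := by
  set J := stdJ n with hJdef
  have hJT : Jᵀ = -J := by
    simp [hJdef, stdJ, Matrix.fromBlocks_transpose, Matrix.fromBlocks_neg]
  have hS' : Sᵀ * J * S = J := hS
  have hT : (S - 1)ᵀ = Sᵀ - 1 := by simp
  have hdetT : (Sᵀ - 1).det ≠ 0 := by
    rw [← hT, Matrix.det_transpose]; exact h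
  have hu : IsUnit (S - 1).det := isUnit_iff_ne_zero.mpr h
  have huT : IsUnit (Sᵀ - 1).det := isUnit_iff_ne_zero.mpr hdetT
  have key : (Sᵀ - 1) * (J * (S + 1)) = ((Sᵀ + 1) * -J) * (S - 1) := by
    have expand : (Sᵀ - 1) * (J * (S + 1)) - ((Sᵀ + 1) * -J) * (S - 1)
        = (Sᵀ * J * S - J) + (Sᵀ * J * S - J) := by noncomm_ring
    have h0 : (Sᵀ - 1) * (J * (S + 1)) - ((Sᵀ + 1) * -J) * (S - 1) = 0 := by
      rw [expand, hS']; simp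
    exact sub_eq_zero.mp h0
  -- main: M = Mᵀ where M = J * (S+1) * (S-1)⁻¹
  have hM : J * (S + 1) * (S - 1)⁻¹ = (Sᵀ - 1)⁻¹ * (Sᵀ + 1) * -J := by
    have h1 : (Sᵀ - 1)⁻¹ * ((Sᵀ - 1) * (J * (S + 1))) * (S - 1)⁻¹
        = (Sᵀ - 1)⁻¹ * (((Sᵀ + 1) * -J) * (S - 1)) * (S - 1)⁻¹ := by rw [key]
    calc J * (S + 1) * (S - 1)⁻¹
        = (Sᵀ - 1)⁻¹ * ((Sᵀ - 1) * (J * (S + 1))) * (S - 1)⁻¹ := by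
          rw [← Matrix.mul_assoc, Matrix.nonsing_inv_mul _ huT, Matrix.one_mul,
            Matrix.mul_assoc]
      _ = (Sᵀ - 1)⁻¹ * (((Sᵀ + 1) * -J) * (S - 1)) * (S - 1)⁻¹ := h1
      _ = (Sᵀ - 1)⁻¹ * (Sᵀ + 1) * -J := by
          rw [Matrix.mul_assoc ((Sᵀ - 1)⁻¹), Matrix.mul_assoc ((Sᵀ + 1) * -J),
            Matrix.mul_nonsing_inv _ hu, Matrix.mul_one, ← Matrix.mul_assoc,
            Matrix.mul_assoc ((Sᵀ - 1)⁻¹)]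
  have hMT : (J * (S + 1) * (S - 1)⁻¹)ᵀ = (Sᵀ - 1)⁻¹ * (Sᵀ + 1) * -J := by
    rw [Matrix.transpose_mul, Matrix.transpose_mul, Matrix.transpose_nonsing_inv, hT, hJT]
    simp [Matrix.mul_assoc]
  unfold cayley
  rw [Matrix.transpose_smul, ← hJdef, hMT, hM]
end

section
/- Let S and S′ be real 2n×2n symplectic matrices with det(S − I) ≠ 0, det(S′ − I) ≠ 0 and det(SS′ − I) ≠ 0. Then the matrix M_S + M_{S′} is invertible and (M_S + M_{S′})⁻¹ = −(S′ − I)·(SS′ − I)⁻¹·(S − I)·J, where M_S and M_{S′} are the symplectic Cayley transforms of S and S′. -/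
open Matrix

lemma stdJ_sq (n : ℕ) : stdJ n * stdJ n = -1 := by
  ext (i | i) (j | j) <;>
    simp [stdJ, Matrix.fromBlocks_multiply, Matrix.one_apply]

theorem cayley_add_inv {n : ℕ} (S S' : Matrix (Fin n ⊕ Fin n) (Fin n ⊕ Fin n) ℝ)
    (hS : IsSymplectic S) (hS' : IsSymplectic S')
    (h : (S - 1).det ≠ 0) (h' : (S' - 1).det ≠ 0) (h'' : (S * S' - 1).det ≠ 0) :
    IsUnit (cayley S + cayley S') ∧
      (cayley S + cayley S')⁻¹ = -((S' - 1) * (S * S' - 1)⁻¹ * (S - 1) * stdJ n) := by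
  set J := stdJ n with hJ
  have hu : IsUnit (S - 1).det := isUnit_iff_ne_zero.mpr h
  have hu' : IsUnit (S' - 1).det := isUnit_iff_ne_zero.mpr h'
  have hu'' : IsUnit (S * S' - 1).det := isUnit_iff_ne_zero.mpr h''
  -- commutation : (S+1) * (S-1)⁻¹ = (S-1)⁻¹ * (S+1)
  have hcomm : (S + 1) * (S - 1)⁻¹ = (S - 1)⁻¹ * (S + 1) := by
    have hm : (S - 1) * ((S + 1) * (S - 1)⁻¹) = (S + 1) := by
      rw [← Matrix.mul_assoc, show (S - 1) * (S + 1) = (S + 1) * (S - 1) by noncomm_ring,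
        Matrix.mul_assoc, Matrix.mul_nonsing_inv _ hu, Matrix.mul_one]
    calc (S + 1) * (S - 1)⁻¹
        = (S - 1)⁻¹ * ((S - 1) * ((S + 1) * (S - 1)⁻¹)) := by
          rw [Matrix.nonsing_inv_mul_cancel_left _ _ hu]
      _ = (S - 1)⁻¹ * (S + 1) := by rw [hm]
  -- the algebraic identity
  have hid : (S + 1) * (S' - 1) + (S - 1) * (S' + 1) = (2 : ℝ) • (S * S' - 1) := by
    have h2 : ((2 : ℝ) • (S * S' - 1) : Matrix _ _ ℝ) = (S * S' - 1) + (S * S' - 1) := by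
      rw [two_smul]
    rw [h2]; noncomm_ring
  have key : cayley S + cayley S' = J * (S - 1)⁻¹ * (S * S' - 1) * (S' - 1)⁻¹ := by
    have step : (S + 1) * (S - 1)⁻¹ + (S' + 1) * (S' - 1)⁻¹
        = (2 : ℝ) • ((S - 1)⁻¹ * (S * S' - 1) * (S' - 1)⁻¹) := by
      have e2 : (2 : ℝ) • ((S - 1)⁻¹ * (S * S' - 1) * (S' - 1)⁻¹)
          = (S - 1)⁻¹ * ((2 : ℝ) • (S * S' - 1)) * (S' - 1)⁻¹ := by
        simp only [Matrix.mul_smul, Matrix.smul_mul]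
      have hcommS : S * (S - 1)⁻¹ = (S - 1)⁻¹ * S := by
        have hm : (S - 1) * (S * (S - 1)⁻¹) = S := by
          rw [← Matrix.mul_assoc, show (S - 1) * S = S * (S - 1) by noncomm_ring,
            Matrix.mul_assoc, Matrix.mul_nonsing_inv _ hu, Matrix.mul_one]
        calc S * (S - 1)⁻¹ = (S - 1)⁻¹ * ((S - 1) * (S * (S - 1)⁻¹)) := by
              rw [Matrix.nonsing_inv_mul_cancel_left _ _ hu]
          _ = (S - 1)⁻¹ * S := by rw [hm]
      rw [e2, ← hid]
      simp only [Matrix.mul_add, Matrix.add_mul, Matrix.mul_assoc, Matrix.one_mul,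
        Matrix.mul_one, Matrix.mul_nonsing_inv _ hu',
        Matrix.nonsing_inv_mul_cancel_left _ _ hu, hcommS]
    show ((1:ℝ)/2) • (J * (S + 1) * (S - 1)⁻¹) + ((1:ℝ)/2) • (J * (S' + 1) * (S' - 1)⁻¹)
        = J * (S - 1)⁻¹ * (S * S' - 1) * (S' - 1)⁻¹
    rw [← smul_add, Matrix.mul_assoc J (S + 1), Matrix.mul_assoc J (S' + 1),
      ← Matrix.mul_add, step, Matrix.mul_smul, smul_smul]
    norm_num
    rw [← Matrix.mul_assoc, ← Matrix.mul_assoc]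
  -- the product is 1
  have hmul : (cayley S + cayley S') * (-((S' - 1) * (S * S' - 1)⁻¹ * (S - 1) * J)) = 1 := by
    rw [key, Matrix.mul_neg]
    have hc : J * (S - 1)⁻¹ * (S * S' - 1) * (S' - 1)⁻¹ *
        ((S' - 1) * (S * S' - 1)⁻¹ * (S - 1) * J) = J * J := by
      simp only [Matrix.mul_assoc]
      rw [Matrix.nonsing_inv_mul_cancel_left _ _ hu',
        Matrix.mul_nonsing_inv_cancel_left _ _ hu'',
        Matrix.nonsing_inv_mul_cancel_left _ _ hu]
    rw [hc, hJ, stdJ_sq, neg_neg]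
  have hmul' : (-((S' - 1) * (S * S' - 1)⁻¹ * (S - 1) * J)) * (cayley S + cayley S') = 1 :=
    mul_eq_one_comm.mp hmul
  exact ⟨⟨⟨_, _, hmul, hmul'⟩, rfl⟩, Matrix.inv_eq_right_inv hmul⟩
end

section
/- Let S and S′ be real 2n×2n symplectic matrices with det(S − I) ≠ 0, det(S′ − I) ≠ 0 and det(SS′ − I) ≠ 0. Then the symplectic Cayley transform of the product SS′ is given by M_{SS′} = M_S + (Sᵀ − I)⁻¹·J·(M_S + M_{S′})⁻¹·J·(S − I)⁻¹. -/
open Matrix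

/-- `(1+X+Y) * (Si*((S-1)*(Z*(S*(S'-1))))) = 1`, a pure ring computation. -/
lemma aux1 {R : Type*} [Ring R] (S S' Si X Y Z : R)
    (hSi1 : Si * S = 1) (hSi2 : S * Si = 1)
    (hX1 : X * (S - 1) = 1) (hX2 : (S - 1) * X = 1)
    (hY1 : Y * (S' - 1) = 1)
    (hZ2 : (S * S' - 1) * Z = 1) :
    (1 + X + Y) * (Si * ((S - 1) * (Z * (S * (S' - 1))))) = 1 := by
  set W := Z * (S * (S' - 1)) with hW
  have c1 : Si * (S - 1) = 1 - Si := by rw [mul_sub, mul_one, hSi1]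
  have c2 : (S - 1) * Si = 1 - Si := by rw [sub_mul, one_mul, hSi2]
  have hcomm : X * Si = Si * X := by
    calc X * Si = X * (Si * ((S - 1) * X)) := by rw [hX2, mul_one]
      _ = X * ((Si * (S - 1)) * X) := by noncomm_ring
      _ = X * (((S - 1) * Si) * X) := by rw [c1, ← c2]
      _ = (X * (S - 1)) * (Si * X) := by noncomm_ring
      _ = Si * X := by rw [hX1, one_mul]
  have k3 : X * (Si * ((S - 1) * W)) = Si * W := by
    calc X * (Si * ((S - 1) * W)) = (X * Si) * ((S - 1) * W) := by noncomm_ring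
      _ = (Si * X) * ((S - 1) * W) := by rw [hcomm]
      _ = Si * ((X * (S - 1)) * W) := by noncomm_ring
      _ = Si * W := by rw [hX1, one_mul]
  have k4 : Si * ((S - 1) * W) + Si * W = W := by
    calc Si * ((S - 1) * W) + Si * W = (Si * S) * W := by noncomm_ring
      _ = W := by rw [hSi1, one_mul]
  have k5 : (S' - 1) + Si * (S - 1) = Si * (S * S' - 1) := by
    rw [c1, mul_sub, mul_one, ← mul_assoc, hSi1, one_mul]
    noncomm_ring
  calc (1 + X + Y) * (Si * ((S - 1) * W))
      = (Si * ((S - 1) * W) + X * (Si * ((S - 1) * W))) + Y * (Si * ((S - 1) * W)) := by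
        noncomm_ring
    _ = (Si * ((S - 1) * W) + Si * W) + Y * (Si * ((S - 1) * W)) := by rw [k3]
    _ = W + Y * (Si * ((S - 1) * W)) := by rw [k4]
    _ = Y * ((S' - 1) * W) + Y * (Si * ((S - 1) * W)) := by
        have kW : Y * ((S' - 1) * W) = W := by rw [← mul_assoc, hY1, one_mul]
        rw [kW]
    _ = Y * (((S' - 1) + Si * (S - 1)) * W) := by noncomm_ring
    _ = Y * ((Si * (S * S' - 1)) * W) := by rw [k5]
    _ = Y * (Si * (((S * S' - 1) * Z) * (S * (S' - 1)))) := by rw [hW]; noncomm_ring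
    _ = Y * (Si * (S * (S' - 1))) := by rw [hZ2, one_mul]
    _ = Y * ((Si * S) * (S' - 1)) := by noncomm_ring
    _ = Y * (S' - 1) := by rw [hSi1, one_mul]
    _ = 1 := hY1

/-- The key identity for the final assembly, a pure ring computation. -/
lemma aux2 {R : Type*} [Ring R] (S S' Si X Z J : R)
    (hJJ : J * J = -1) (hSi2 : S * Si = 1)
    (hX1 : X * (S - 1) = 1) (hX2 : (S - 1) * X = 1)
    (hZ1 : Z * (S * S' - 1) = 1) :
    J * Z = J * X +
      (J * (X * (S * J))) * J * ((Si * ((S - 1) * (Z * (S * (S' - 1))))) * (-J)) * J * X := by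
  have k1 : Z * ((S * S' - 1) * X) = X := by rw [← mul_assoc, hZ1, one_mul]
  have k2 : Z * ((S - 1) * X) = Z := by rw [hX2, mul_one]
  have e : Z - X = -(Z * ((S * (S' - 1)) * X)) := by
    calc Z - X = Z * ((S - 1) * X) - Z * ((S * S' - 1) * X) := by rw [k1, k2]
      _ = -(Z * ((S * (S' - 1)) * X)) := by noncomm_ring
  have b1 : (J * (X * (S * J))) * J * ((Si * ((S - 1) * (Z * (S * (S' - 1))))) * (-J)) * J * X
      = -((J * (X * (S * (J * J)))) *
          ((Si * ((S - 1) * (Z * (S * (S' - 1))))) * ((J * J) * X))) := by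
    noncomm_ring
  rw [hJJ] at b1
  have b2 : -((J * (X * (S * (-1 : R)))) *
        ((Si * ((S - 1) * (Z * (S * (S' - 1))))) * ((-1 : R) * X)))
      = -(J * (X * ((S * Si) * ((S - 1) * (Z * ((S * (S' - 1)) * X)))))) := by noncomm_ring
  rw [b2, hSi2, one_mul] at b1
  have b3 : -(J * (X * ((S - 1) * (Z * ((S * (S' - 1)) * X)))))
      = -(J * ((X * (S - 1)) * (Z * ((S * (S' - 1)) * X)))) := by noncomm_ring
  rw [b3, hX1, one_mul] at b1
  calc J * Z = J * X + (J * Z - J * X) := by noncomm_ring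
    _ = J * X + J * (Z - X) := by rw [mul_sub]
    _ = J * X + J * (-(Z * ((S * (S' - 1)) * X))) := by rw [e]
    _ = J * X + -(J * (Z * ((S * (S' - 1)) * X))) := by rw [mul_neg]
    _ = _ := by rw [← b1]

/-- `(J Si (S-1) J) (J X S J) = 1`, a pure ring computation. -/
lemma auxT {R : Type*} [Ring R] (S Si X J : R)
    (hJJ : J * J = -1) (hSi1 : Si * S = 1) (hX2 : (S - 1) * X = 1) :
    (J * (Si * ((S - 1) * J))) * (J * (X * (S * J))) = 1 := by
  have b1 : (J * (Si * ((S - 1) * J))) * (J * (X * (S * J)))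
      = J * (Si * ((S - 1) * ((J * J) * (X * (S * J))))) := by noncomm_ring
  rw [hJJ] at b1
  have b2 : J * (Si * ((S - 1) * ((-1 : R) * (X * (S * J)))))
      = -(J * (Si * (((S - 1) * X) * (S * J)))) := by noncomm_ring
  rw [b2, hX2, one_mul] at b1
  have b3 : -(J * (Si * (S * J))) = -(J * ((Si * S) * J)) := by noncomm_ring
  rw [b3, hSi1, one_mul, hJJ, neg_neg] at b1
  exact b1

/-- `Sᵀ - 1 = J Si (S-1) J` where `Si = -(J Sᵀ J)` is the inverse of `S`. -/
lemma auxTeq {R : Type*} [Ring R] (S T J : R) (hJJ : J * J = -1)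
    (hSi1 : (-(J * (T * J))) * S = 1) :
    T - 1 = J * ((-(J * (T * J))) * ((S - 1) * J)) := by
  set Si := -(J * (T * J)) with hSi
  have b1 : J * (Si * ((S - 1) * J)) = J * ((Si * S) * J) - J * (Si * J) := by noncomm_ring
  rw [hSi1, one_mul, hJJ] at b1
  have b2 : J * (Si * J) = -((J * J) * (T * (J * J))) := by rw [hSi]; noncomm_ring
  rw [hJJ] at b2
  rw [b2] at b1
  rw [b1]
  noncomm_ring

lemma cayleyExpand {n : ℕ} (T : Matrix (Fin n ⊕ Fin n) (Fin n ⊕ Fin n) ℝ)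
    (h : (T - 1).det ≠ 0) :
    cayley T = ((1 : ℝ) / 2) • stdJ n + stdJ n * (T - 1)⁻¹ := by
  have hT : (T - 1) * (T - 1)⁻¹ = 1 := Matrix.mul_nonsing_inv _ (isUnit_iff_ne_zero.mpr h)
  unfold cayley
  have e1 : stdJ n * (T + 1) * (T - 1)⁻¹
      = stdJ n * ((T - 1) * (T - 1)⁻¹) + (stdJ n * (T - 1)⁻¹ + stdJ n * (T - 1)⁻¹) := by
    noncomm_ring
  rw [e1, hT, mul_one]
  module

theorem cayley_mul {n : ℕ} (S S' : Matrix (Fin n ⊕ Fin n) (Fin n ⊕ Fin n) ℝ)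
    (hS : IsSymplectic S) (hS' : IsSymplectic S')
    (h : (S - 1).det ≠ 0) (h' : (S' - 1).det ≠ 0) (h'' : (S * S' - 1).det ≠ 0) :
    cayley (S * S') =
      cayley S + (Sᵀ - 1)⁻¹ * stdJ n * (cayley S + cayley S')⁻¹ * stdJ n * (S - 1)⁻¹ := by
  have hJJ : stdJ n * stdJ n = -1 := stdJ_sq n
  have hS0 : Sᵀ * stdJ n * S = stdJ n := hS
  -- the inverse of S
  have hSi1 : (-(stdJ n * (Sᵀ * stdJ n))) * S = 1 := by
    have h1 : stdJ n * (Sᵀ * (stdJ n * S)) = -1 := by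
      calc stdJ n * (Sᵀ * (stdJ n * S)) = stdJ n * (Sᵀ * stdJ n * S) := by noncomm_ring
        _ = stdJ n * stdJ n := by rw [hS0]
        _ = -1 := hJJ
    calc (-(stdJ n * (Sᵀ * stdJ n))) * S = -(stdJ n * (Sᵀ * (stdJ n * S))) := by noncomm_ring
      _ = 1 := by rw [h1, neg_neg]
  have hSi2 : S * (-(stdJ n * (Sᵀ * stdJ n))) = 1 := mul_eq_one_comm.mp hSi1
  have hX1 : (S - 1)⁻¹ * (S - 1) = 1 := Matrix.nonsing_inv_mul _ (isUnit_iff_ne_zero.mpr h)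
  have hX2 : (S - 1) * (S - 1)⁻¹ = 1 := Matrix.mul_nonsing_inv _ (isUnit_iff_ne_zero.mpr h)
  have hY1 : (S' - 1)⁻¹ * (S' - 1) = 1 := Matrix.nonsing_inv_mul _ (isUnit_iff_ne_zero.mpr h')
  have hZ1 : (S * S' - 1)⁻¹ * (S * S' - 1) = 1 :=
    Matrix.nonsing_inv_mul _ (isUnit_iff_ne_zero.mpr h'')
  have hZ2 : (S * S' - 1) * (S * S' - 1)⁻¹ = 1 :=
    Matrix.mul_nonsing_inv _ (isUnit_iff_ne_zero.mpr h'')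
  -- expand the Cayley transforms
  rw [cayleyExpand (S * S') h'', cayleyExpand S' h', cayleyExpand S h]
  -- the sum of the Cayley transforms
  have hsum : ((1 : ℝ) / 2) • stdJ n + stdJ n * (S - 1)⁻¹ +
      (((1 : ℝ) / 2) • stdJ n + stdJ n * (S' - 1)⁻¹)
      = stdJ n * (1 + (S - 1)⁻¹ + (S' - 1)⁻¹) := by
    have e : stdJ n * (1 + (S - 1)⁻¹ + (S' - 1)⁻¹)
        = stdJ n + (stdJ n * (S - 1)⁻¹ + stdJ n * (S' - 1)⁻¹) := by noncomm_ring
    rw [e]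
    module
  rw [hsum]
  -- invert the sum
  have hAC : (1 + (S - 1)⁻¹ + (S' - 1)⁻¹) *
      ((-(stdJ n * (Sᵀ * stdJ n))) *
        ((S - 1) * ((S * S' - 1)⁻¹ * (S * (S' - 1))))) = 1 :=
    aux1 S S' _ _ _ _ hSi1 hSi2 hX1 hX2 hY1 hZ2
  have hAinv : (stdJ n * (1 + (S - 1)⁻¹ + (S' - 1)⁻¹))⁻¹
      = ((-(stdJ n * (Sᵀ * stdJ n))) *
          ((S - 1) * ((S * S' - 1)⁻¹ * (S * (S' - 1))))) * (-(stdJ n)) := by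
    apply Matrix.inv_eq_right_inv
    calc stdJ n * (1 + (S - 1)⁻¹ + (S' - 1)⁻¹) *
        (((-(stdJ n * (Sᵀ * stdJ n))) *
          ((S - 1) * ((S * S' - 1)⁻¹ * (S * (S' - 1))))) * (-(stdJ n)))
        = -(stdJ n * (((1 + (S - 1)⁻¹ + (S' - 1)⁻¹) *
            ((-(stdJ n * (Sᵀ * stdJ n))) *
              ((S - 1) * ((S * S' - 1)⁻¹ * (S * (S' - 1)))))) * stdJ n)) := by noncomm_ring
      _ = -(stdJ n * (1 * stdJ n)) := by rw [hAC]
      _ = 1 := by rw [one_mul, hJJ, neg_neg]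
  rw [hAinv]
  -- invert Sᵀ - 1
  have hTeq : Sᵀ - 1 = stdJ n * ((-(stdJ n * (Sᵀ * stdJ n))) * ((S - 1) * stdJ n)) :=
    auxTeq S Sᵀ (stdJ n) hJJ hSi1
  have hTinv : (Sᵀ - 1)⁻¹ = stdJ n * ((S - 1)⁻¹ * (S * stdJ n)) := by
    apply Matrix.inv_eq_right_inv
    rw [hTeq]
    exact auxT S _ _ _ hJJ hSi1 hX2
  rw [hTinv]
  -- final assembly
  have main : stdJ n * (S * S' - 1)⁻¹ = stdJ n * (S - 1)⁻¹ +
      (stdJ n * ((S - 1)⁻¹ * (S * stdJ n))) * stdJ n *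
        (((-(stdJ n * (Sᵀ * stdJ n))) *
          ((S - 1) * ((S * S' - 1)⁻¹ * (S * (S' - 1))))) * (-(stdJ n))) * stdJ n *
        (S - 1)⁻¹ :=
    aux2 S S' _ _ _ _ hJJ hSi2 hX1 hX2 hZ1
  rw [main]
  exact (add_assoc _ _ _).symm
end

section
/- Let S be a real 2n×2n symplectic matrix, written in n×n blocks as S = [[A, B],[C, D]], with B invertible. Then det(S − I) = (−1)ⁿ · det(B) · det(B⁻¹·A + D·B⁻¹ − B⁻¹ − (Bᵀ)⁻¹). -/
open Matrix

lemma detJ' {n : ℕ} :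
    (Matrix.fromBlocks (0 : Matrix (Fin n) (Fin n) ℝ) (-1 : Matrix (Fin n) (Fin n) ℝ)
      (1 : Matrix (Fin n) (Fin n) ℝ) (0 : Matrix (Fin n) (Fin n) ℝ)).det = 1 := by
  have : (Matrix.fromBlocks (0 : Matrix (Fin n) (Fin n) ℝ) (-1 : Matrix (Fin n) (Fin n) ℝ)
      (1 : Matrix (Fin n) (Fin n) ℝ) (0 : Matrix (Fin n) (Fin n) ℝ)) =
      Matrix.fromBlocks 1 (-1) 0 1 * Matrix.fromBlocks 1 0 1 1 *
        Matrix.fromBlocks 1 (-1) 0 1 := by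
    simp [Matrix.fromBlocks_multiply]
  rw [this, Matrix.det_mul, Matrix.det_mul, Matrix.det_fromBlocks_zero₂₁,
    Matrix.det_fromBlocks_zero₁₂]
  simp

theorem det_free_symplectic_sub_one {n : ℕ} (A B C D : Matrix (Fin n) (Fin n) ℝ)
    (hS : IsSymplectic (Matrix.fromBlocks A B C D)) (hB : B.det ≠ 0) :
    (Matrix.fromBlocks A B C D - 1).det =
      (-1 : ℝ) ^ n * B.det * (B⁻¹ * A + D * B⁻¹ - B⁻¹ - (Bᵀ)⁻¹).det := by
  have hBu : IsUnit B.det := isUnit_iff_ne_zero.mpr hB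
  haveI : Invertible B := B.invertibleOfIsUnitDet hBu
  haveI : Invertible Bᵀ := B.transpose.invertibleOfIsUnitDet (by rwa [Matrix.det_transpose])
  -- extract block identities from symplecticity
  unfold IsSymplectic stdJ at hS
  rw [Matrix.fromBlocks_transpose, Matrix.fromBlocks_multiply,
    Matrix.fromBlocks_multiply] at hS
  have h12 : Aᵀ * D - Cᵀ * B = 1 := by
    have := congrArg Matrix.toBlocks₁₂ hS
    simp [Matrix.toBlocks_fromBlocks₁₂] at this
    linear_combination (norm := noncomm_ring) this
  have h22 : Bᵀ * D = Dᵀ * B := by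
    have := congrArg Matrix.toBlocks₂₂ hS
    simp [Matrix.toBlocks_fromBlocks₂₂] at this
    linear_combination (norm := noncomm_ring) this
  -- key identity: D * B⁻¹ * A - C = (Bᵀ)⁻¹
  have hkey : D * B⁻¹ * A - C = (Bᵀ)⁻¹ := by
    have h12' : Dᵀ * A - Bᵀ * C = 1 := by
      have := congrArg Matrix.transpose h12
      simpa [Matrix.transpose_sub, Matrix.transpose_mul] using this
    have : Bᵀ * (D * B⁻¹ * A - C) = 1 := by
      have hBB : B * B⁻¹ = 1 := Matrix.mul_nonsing_inv B hBu
      calc Bᵀ * (D * B⁻¹ * A - C) = Bᵀ * D * B⁻¹ * A - Bᵀ * C := by noncomm_ring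
        _ = Dᵀ * (B * B⁻¹) * A - Bᵀ * C := by rw [h22]; noncomm_ring
        _ = Dᵀ * A - Bᵀ * C := by rw [hBB, Matrix.mul_one]
        _ = 1 := h12'
    exact (Matrix.inv_eq_right_inv this).symm
  -- determinant computation via multiplication by J'
  have hmul : (Matrix.fromBlocks A B C D - 1) * Matrix.fromBlocks 0 (-1) 1 0 =
      Matrix.fromBlocks B (1 - A) (D - 1) (-C) := by
    have h1 : (Matrix.fromBlocks A B C D - 1) =
        Matrix.fromBlocks (A - 1) B C (D - 1) := by
      rw [← Matrix.fromBlocks_one, sub_eq_add_neg, Matrix.fromBlocks_neg,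
        Matrix.fromBlocks_add]
      rw [Matrix.fromBlocks_inj]; refine ⟨by abel, by abel, by abel, by abel⟩
    rw [h1, Matrix.fromBlocks_multiply]
    rw [Matrix.fromBlocks_inj]
    refine ⟨by noncomm_ring, by noncomm_ring, by noncomm_ring, by noncomm_ring⟩
  have hdet : (Matrix.fromBlocks A B C D - 1).det =
      (Matrix.fromBlocks B (1 - A) (D - 1) (-C)).det := by
    have := congrArg Matrix.det hmul
    rwa [Matrix.det_mul, detJ', mul_one] at this
  rw [hdet, Matrix.det_fromBlocks₁₁, Matrix.invOf_eq_nonsing_inv]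
  have hschur : -C - (D - 1) * B⁻¹ * (1 - A) =
      -(B⁻¹ * A + D * B⁻¹ - B⁻¹ - (Bᵀ)⁻¹) := by
    rw [← hkey]; noncomm_ring
  rw [hschur, Matrix.det_neg, Fintype.card_fin]
  ring
end

section
/- Let S be a real 2n×2n symplectic matrix, written in n×n blocks as S = [[A, B],[C, D]], with B invertible and det(S − I) ≠ 0. Then the symmetric matrix W″ = D·B⁻¹ + B⁻¹·A − B⁻¹ − (Bᵀ)⁻¹ is invertible. -/
open Matrix

/-!
Swapping the two block columns of `S - 1` gives `[[B, A - 1], [D - 1, C]]`, whose determinant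
is `det B * det (C - (D - 1) * B⁻¹ * (A - 1))` by the Schur complement formula, so
`det (S - 1) = ± det B * det (C - (D - 1) * B⁻¹ * (A - 1))`. The symplectic relations
`Bᵀ * D = Dᵀ * B` and `Bᵀ * C = Dᵀ * A - 1` turn this Schur complement into `W″`.
-/

namespace Matrix

variable {l m R : Type*} [DecidableEq l] [DecidableEq m] [CommRing R]

theorem det_fromBlocks_swap_cols [Fintype m] (A B C D : Matrix m m R) :
    (fromBlocks B A D C).det = Equiv.Perm.sign (Equiv.sumComm m m) * (fromBlocks A B C D).det := by
  rw [← det_permute']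
  simp

theorem isUnit_det_fromBlocks_swap_cols [Fintype m] {A B C D : Matrix m m R} :
    IsUnit (fromBlocks B A D C).det ↔ IsUnit (fromBlocks A B C D).det := by
  have hsign : IsUnit ((Equiv.Perm.sign (Equiv.sumComm m m) : ℤ) : R) :=
    (Equiv.Perm.sign _).isUnit.map (Int.castRingHom R)
  rw [det_fromBlocks_swap_cols, IsUnit.mul_iff, and_iff_right hsign]

theorem fromBlocks_sub_one (A : Matrix l l R) (B : Matrix l m R) (C : Matrix m l R)
    (D : Matrix m m R) :
    fromBlocks A B C D - 1 = fromBlocks (A - 1) B C (D - 1) := by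
  rw [← fromBlocks_one, sub_eq_add_neg, fromBlocks_neg, fromBlocks_add]
  simp [sub_eq_add_neg]

end Matrix

namespace IsSymplectic

variable {n : ℕ} {A B C D : Matrix (Fin n) (Fin n) ℝ}

theorem fromBlocks_bottom_row (hS : IsSymplectic (fromBlocks A B C D)) :
    Bᵀ * C = Dᵀ * A - 1 ∧ Bᵀ * D = Dᵀ * B := by
  rw [IsSymplectic, stdJ, fromBlocks_transpose, fromBlocks_multiply, fromBlocks_multiply,
    fromBlocks_inj] at hS
  obtain ⟨-, -, h21, h22⟩ := hS
  simp only [Matrix.mul_zero, Matrix.mul_one, Matrix.mul_neg, zero_add, add_zero,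
    Matrix.neg_mul] at h21 h22
  constructor
  · exact (neg_add_eq_iff_eq_add.mp h21).trans (sub_eq_add_neg _ _).symm
  · exact (neg_add_eq_zero.mp h22).symm

theorem schur_complement_eq (hS : IsSymplectic (fromBlocks A B C D)) (hB : IsUnit B.det) :
    C - (D - 1) * B⁻¹ * (A - 1) = D * B⁻¹ + B⁻¹ * A - B⁻¹ - (Bᵀ)⁻¹ := by
  obtain ⟨hC, hD⟩ := hS.fromBlocks_bottom_row
  have hBT : IsUnit Bᵀ.det := by rwa [det_transpose]
  have hDBA : D * B⁻¹ * A = (Bᵀ)⁻¹ * (Dᵀ * A) := calc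
    D * B⁻¹ * A = (Bᵀ)⁻¹ * (Bᵀ * D) * B⁻¹ * A := by
      rw [← Matrix.mul_assoc, nonsing_inv_mul _ hBT, Matrix.one_mul]
    _ = (Bᵀ)⁻¹ * (Dᵀ * A) := by
      rw [hD, Matrix.mul_assoc _ _ B⁻¹, Matrix.mul_assoc Dᵀ, mul_nonsing_inv _ hB,
        Matrix.mul_one, Matrix.mul_assoc]
  have hC' : C = (Bᵀ)⁻¹ * (Dᵀ * A) - (Bᵀ)⁻¹ := by
    rw [← mul_sub_one, ← hC, ← Matrix.mul_assoc, nonsing_inv_mul _ hBT, Matrix.one_mul]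
  rw [hC', ← hDBA]
  noncomm_ring

end IsSymplectic

theorem hessian_invertible {n : ℕ} (A B C D : Matrix (Fin n) (Fin n) ℝ)
    (hS : IsSymplectic (Matrix.fromBlocks A B C D)) (hB : B.det ≠ 0)
    (h : (Matrix.fromBlocks A B C D - 1).det ≠ 0) :
    IsUnit (D * B⁻¹ + B⁻¹ * A - B⁻¹ - (Bᵀ)⁻¹) := by
  have hBu : IsUnit B.det := isUnit_iff_ne_zero.2 hB
  let : Invertible B := B.invertibleOfIsUnitDet hBu
  have hswap : IsUnit (fromBlocks B (A - 1) (D - 1) C).det := by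
    rw [isUnit_det_fromBlocks_swap_cols, ← fromBlocks_sub_one]
    exact isUnit_iff_ne_zero.2 h
  rw [det_fromBlocks₁₁, invOf_eq_nonsing_inv, hS.schur_complement_eq hBu] at hswap
  exact (isUnit_iff_isUnit_det _).2 (isUnit_of_mul_isUnit_right hswap)
end

section
/- Let S be a real 2n×2n symplectic matrix, written in n×n blocks as S = [[A, B],[C, D]], with B invertible and det(S − I) ≠ 0, and set W″ = D·B⁻¹ + B⁻¹·A − B⁻¹ − (Bᵀ)⁻¹ (an invertible matrix). Then (S − I)⁻¹ is the block matrix [[(W″)⁻¹·(I − D)·B⁻¹, (W″)⁻¹],[B⁻¹·(I − A)·(W″)⁻¹·(I − D)·B⁻¹ + B⁻¹, B⁻¹·(I − A)·(W″)⁻¹]]. -/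
open Matrix

theorem inv_sub_one_block_formula {n : ℕ} (A B C D W : Matrix (Fin n) (Fin n) ℝ)
    (hS : IsSymplectic (Matrix.fromBlocks A B C D)) (hB : B.det ≠ 0)
    (h : (Matrix.fromBlocks A B C D - 1).det ≠ 0)
    (hW : W = D * B⁻¹ + B⁻¹ * A - B⁻¹ - (Bᵀ)⁻¹) :
    (Matrix.fromBlocks A B C D - 1)⁻¹ =
      Matrix.fromBlocks (W⁻¹ * (1 - D) * B⁻¹) W⁻¹
        (B⁻¹ * (1 - A) * W⁻¹ * (1 - D) * B⁻¹ + B⁻¹) (B⁻¹ * (1 - A) * W⁻¹) := by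
  have hBu : IsUnit B.det := isUnit_iff_ne_zero.mpr hB
  -- Extract the symplectic relations
  have hS' := hS
  unfold IsSymplectic stdJ at hS'
  rw [Matrix.fromBlocks_transpose, Matrix.fromBlocks_multiply, Matrix.fromBlocks_multiply] at hS'
  have h12 := congrArg Matrix.toBlocks₁₂ hS'
  have h22 := congrArg Matrix.toBlocks₂₂ hS'
  simp only [Matrix.toBlocks_fromBlocks₁₂, Matrix.toBlocks_fromBlocks₂₂,
    Matrix.mul_zero, Matrix.mul_one, Matrix.mul_neg, zero_add, add_zero,
    Matrix.neg_mul, Matrix.zero_mul] at h12 h22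
  have hBD : Dᵀ * B = Bᵀ * D := neg_add_eq_zero.mp h22
  have hAD : Dᵀ * A - Bᵀ * C = 1 := by
    have h12' : Aᵀ * D - Cᵀ * B = 1 := by rw [← h12]; noncomm_ring
    have := congrArg Matrix.transpose h12'
    simpa only [Matrix.transpose_sub, Matrix.transpose_mul, Matrix.transpose_transpose,
      Matrix.transpose_one] using this
  have hkey : (Bᵀ)⁻¹ = D * B⁻¹ * A - C := by
    apply Matrix.inv_eq_right_inv
    calc Bᵀ * (D * B⁻¹ * A - C) = Bᵀ * D * B⁻¹ * A - Bᵀ * C := by noncomm_ring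
      _ = Dᵀ * B * B⁻¹ * A - Bᵀ * C := by rw [hBD]
      _ = Dᵀ * A - Bᵀ * C := by rw [Matrix.mul_nonsing_inv_cancel_right _ _ hBu]
      _ = 1 := hAD
  have hCW : W = C + (D - 1) * (B⁻¹ * (1 - A)) := by
    rw [hW, hkey]; noncomm_ring
  -- W is invertible
  have hsub : Matrix.fromBlocks A B C D - 1
      = Matrix.fromBlocks (A - 1) B C (D - 1) := by
    rw [← Matrix.fromBlocks_one, sub_eq_add_neg, Matrix.fromBlocks_neg,
      Matrix.fromBlocks_add, Matrix.fromBlocks_inj]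
    refine ⟨by noncomm_ring, by simp, by simp, by noncomm_ring⟩
  have e1 : Matrix.fromBlocks (A - 1) B C (D - 1) * Matrix.fromBlocks 1 0 (B⁻¹ * (1 - A)) 1
      = Matrix.fromBlocks 0 B W (D - 1) := by
    rw [Matrix.fromBlocks_multiply, Matrix.fromBlocks_inj]
    refine ⟨?_, by simp, ?_, by simp⟩
    · rw [Matrix.mul_one, Matrix.mul_nonsing_inv_cancel_left _ _ hBu]; noncomm_ring
    · rw [hCW]; simp
  have e2 : Matrix.fromBlocks (0 : Matrix (Fin n) (Fin n) ℝ) B W (D - 1)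
      * Matrix.fromBlocks (0 : Matrix (Fin n) (Fin n) ℝ) (1 : Matrix (Fin n) (Fin n) ℝ) 1 0
      = Matrix.fromBlocks B 0 (D - 1) W := by
    rw [Matrix.fromBlocks_multiply]; simp
  have hNN : Matrix.fromBlocks (0 : Matrix (Fin n) (Fin n) ℝ) (1 : Matrix (Fin n) (Fin n) ℝ) 1 0
      * Matrix.fromBlocks (0 : Matrix (Fin n) (Fin n) ℝ) (1 : Matrix (Fin n) (Fin n) ℝ) 1 0
      = (1 : Matrix (Fin n ⊕ Fin n) (Fin n ⊕ Fin n) ℝ) := by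
    rw [Matrix.fromBlocks_multiply]; simp [Matrix.fromBlocks_one]
  have hdetN : (Matrix.fromBlocks (0 : Matrix (Fin n) (Fin n) ℝ)
      (1 : Matrix (Fin n) (Fin n) ℝ) 1 0).det ≠ 0 := by
    intro h0
    have := congrArg Matrix.det hNN
    rw [Matrix.det_mul, h0, Matrix.det_one] at this
    simpa using this
  have hdetU : (Matrix.fromBlocks (1 : Matrix (Fin n) (Fin n) ℝ) 0 (B⁻¹ * (1 - A)) 1).det = 1 := by
    rw [Matrix.det_fromBlocks_zero₁₂]; simp
  have hdetEq : (Matrix.fromBlocks A B C D - 1).det * 1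
      * (Matrix.fromBlocks (0 : Matrix (Fin n) (Fin n) ℝ)
        (1 : Matrix (Fin n) (Fin n) ℝ) 1 0).det = B.det * W.det := by
    rw [← hdetU, ← Matrix.det_mul, ← Matrix.det_mul, hsub, e1, e2,
      Matrix.det_fromBlocks_zero₁₂]
  have hWu : IsUnit W.det := by
    rw [isUnit_iff_ne_zero]
    intro h0
    rw [h0, mul_zero] at hdetEq
    exact mul_ne_zero (mul_ne_zero h one_ne_zero) hdetN hdetEq
  -- Final block computation
  haveI := B.invertibleOfIsUnitDet hBu
  haveI := W.invertibleOfIsUnitDet hWu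
  have hC : C = W - (D - 1) * (B⁻¹ * (1 - A)) := by rw [hCW]; abel
  apply Matrix.inv_eq_right_inv
  rw [hsub, ← Matrix.fromBlocks_one, Matrix.fromBlocks_multiply, Matrix.fromBlocks_inj, hC]
  refine ⟨?_, ?_, ?_, ?_⟩ <;>
    simp only [Matrix.mul_add, Matrix.add_mul, Matrix.mul_sub, Matrix.sub_mul,
      Matrix.mul_one, Matrix.one_mul, Matrix.mul_assoc,
      Matrix.mul_inv_cancel_left_of_invertible, Matrix.inv_mul_cancel_left_of_invertible,
      Matrix.mul_inv_of_invertible, Matrix.inv_mul_of_invertible] <;>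
    abel
end

section
/- Let S be a real 2n×2n symplectic matrix, written in n×n blocks as S = [[A, B],[C, D]], with B invertible and det(S − I) ≠ 0, and set W″ = D·B⁻¹ + B⁻¹·A − B⁻¹ − (Bᵀ)⁻¹. Then the symplectic Cayley transform of S is the block matrix M_S = [[B⁻¹·(I − A)·(W″)⁻¹·(I − D)·B⁻¹ + B⁻¹, (1/2)·I + B⁻¹·(I − A)·(W″)⁻¹],[−(1/2)·I − (W″)⁻¹·(I − D)·B⁻¹, −(W″)⁻¹]]. -/
open Matrix

section Aux

variable {R : Type*} [Ring R]

lemma cayley_aux11 (A B C D E W V h : R)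
    (hC : C = (1 - D) * E * (1 - A) + W) (hV : V * W = 1) :
    (E * (1 - A) * V * (1 - D) * E + E) * (A - 1) + (h + E * (1 - A) * V) * C = h * C := by
  rw [hC]
  have t1 : (E * (1 - A) * V * (1 - D) * E + E) * (A - 1)
      + (h + E * (1 - A) * V) * ((1 - D) * E * (1 - A) + W)
      = E * (A - 1) + E * (1 - A) * (V * W) + h * ((1 - D) * E * (1 - A) + W) := by
    noncomm_ring
  rw [t1, hV]
  noncomm_ring

lemma cayley_aux12 (A B D E V h : R) (hE : E * B = 1) (hh : h + h = 1) :
    (E * (1 - A) * V * (1 - D) * E + E) * B + (h + E * (1 - A) * V) * (D - 1) = h * (D + 1) := by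
  have t1 : (E * (1 - A) * V * (1 - D) * E + E) * B + (h + E * (1 - A) * V) * (D - 1)
      = E * (1 - A) * V * ((1 - D) * (E * B)) + E * B + h * (D - 1)
        + E * (1 - A) * V * (D - 1) := by
    noncomm_ring
  rw [t1, hE]
  have t2 : E * (1 - A) * V * ((1 - D) * 1) + 1 + h * (D - 1) + E * (1 - A) * V * (D - 1)
      = 1 + h * D - h := by noncomm_ring
  rw [t2]
  conv_lhs => rw [← hh]
  noncomm_ring

lemma cayley_aux21 (A C D E W V h : R)
    (hC : C = (1 - D) * E * (1 - A) + W) (hV : V * W = 1) (hh : h + h = 1) :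
    (-h - V * (1 - D) * E) * (A - 1) + (-V) * C = h * (-(A + 1)) := by
  rw [hC]
  have t1 : (-h - V * (1 - D) * E) * (A - 1) + (-V) * ((1 - D) * E * (1 - A) + W)
      = -(h * A) + h - V * W := by noncomm_ring
  rw [t1, hV]
  conv_lhs => rw [← hh]
  noncomm_ring

lemma cayley_aux22 (B D E V h : R) (hE : E * B = 1) :
    (-h - V * (1 - D) * E) * B + (-V) * (D - 1) = h * (-B) := by
  have t1 : (-h - V * (1 - D) * E) * B + (-V) * (D - 1)
      = -(h * B) - V * ((1 - D) * (E * B)) - V * (D - 1) := by noncomm_ring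
  rw [t1, hE]
  noncomm_ring

end Aux

theorem cayley_block_formula {n : ℕ} (A B C D W : Matrix (Fin n) (Fin n) ℝ)
    (hS : IsSymplectic (Matrix.fromBlocks A B C D)) (hB : B.det ≠ 0)
    (h : (Matrix.fromBlocks A B C D - 1).det ≠ 0)
    (hW : W = D * B⁻¹ + B⁻¹ * A - B⁻¹ - (Bᵀ)⁻¹) :
    cayley (Matrix.fromBlocks A B C D) =
      Matrix.fromBlocks
        (B⁻¹ * (1 - A) * W⁻¹ * (1 - D) * B⁻¹ + B⁻¹) (((1 : ℝ) / 2) • 1 + B⁻¹ * (1 - A) * W⁻¹)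
        (-(((1 : ℝ) / 2) • 1) - W⁻¹ * (1 - D) * B⁻¹) (-W⁻¹) := by
  have hBu : IsUnit B.det := isUnit_iff_ne_zero.mpr hB
  have hBtu : IsUnit Bᵀ.det := by rwa [Matrix.det_transpose]
  have hEB : B⁻¹ * B = 1 := Matrix.nonsing_inv_mul B hBu
  have hBE : B * B⁻¹ = 1 := Matrix.mul_nonsing_inv B hBu
  -- extract the symplectic relations
  have hS' : (Matrix.fromBlocks A B C D)ᵀ * stdJ n * Matrix.fromBlocks A B C D = stdJ n := hS
  rw [stdJ, Matrix.fromBlocks_transpose, Matrix.fromBlocks_multiply,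
    Matrix.fromBlocks_multiply] at hS'
  rw [Matrix.fromBlocks_inj] at hS'
  obtain ⟨h11, h12, h21, h22⟩ := hS'
  simp only [Matrix.mul_zero, Matrix.mul_one, Matrix.mul_neg,
    zero_add, add_zero, mul_zero, mul_one, mul_neg] at h12 h22
  -- h12 : Cᵀ * -B + Aᵀ * D = 1 (shape to be adjusted), h22 : Dᵀ * -B + Bᵀ * D = 0
  have hCtB : Cᵀ * B = Aᵀ * D - 1 := by
    calc Cᵀ * B = -(-Cᵀ * B + Aᵀ * D) + Aᵀ * D := by noncomm_ring
    _ = Aᵀ * D - 1 := by rw [h12]; noncomm_ring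
  have hBtD : Bᵀ * D = Dᵀ * B := by
    calc Bᵀ * D = (-Dᵀ * B + Bᵀ * D) + Dᵀ * B := by noncomm_ring
    _ = Dᵀ * B := by rw [h22, zero_add]
  -- C = D B⁻¹ A - (Bᵀ)⁻¹
  have hCt : Cᵀ = (Aᵀ * D - 1) * B⁻¹ := by
    calc Cᵀ = Cᵀ * (B * B⁻¹) := by rw [hBE, Matrix.mul_one]
    _ = (Cᵀ * B) * B⁻¹ := by rw [Matrix.mul_assoc]
    _ = (Aᵀ * D - 1) * B⁻¹ := by rw [hCtB]
  have hDBt : (Bᵀ)⁻¹ * Dᵀ = D * B⁻¹ := by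
    calc (Bᵀ)⁻¹ * Dᵀ = (Bᵀ)⁻¹ * Dᵀ * (B * B⁻¹) := by rw [hBE, Matrix.mul_one]
    _ = (Bᵀ)⁻¹ * (Dᵀ * B) * B⁻¹ := by simp only [Matrix.mul_assoc]
    _ = (Bᵀ)⁻¹ * (Bᵀ * D) * B⁻¹ := by rw [hBtD]
    _ = ((Bᵀ)⁻¹ * Bᵀ) * D * B⁻¹ := by simp only [Matrix.mul_assoc]
    _ = D * B⁻¹ := by rw [Matrix.nonsing_inv_mul _ hBtu, Matrix.one_mul]
  have hCval : C = D * B⁻¹ * A - (Bᵀ)⁻¹ := by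
    have : C = (Bᵀ)⁻¹ * (Dᵀ * A - 1) := by
      calc C = Cᵀᵀ := by rw [Matrix.transpose_transpose]
      _ = ((Aᵀ * D - 1) * B⁻¹)ᵀ := by rw [hCt]
      _ = (B⁻¹)ᵀ * (Aᵀ * D - 1)ᵀ := by rw [Matrix.transpose_mul]
      _ = (Bᵀ)⁻¹ * (Dᵀ * A - 1) := by
          rw [Matrix.transpose_nonsing_inv, Matrix.transpose_sub, Matrix.transpose_mul,
            Matrix.transpose_transpose, Matrix.transpose_one]
    rw [this, Matrix.mul_sub, Matrix.mul_one, ← Matrix.mul_assoc, hDBt]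
  have hC : C = (1 - D) * B⁻¹ * (1 - A) + W := by
    rw [hCval, hW]; noncomm_ring
  -- W is invertible
  have hWu : IsUnit W.det := by
    have hSm : Matrix.fromBlocks A B C D - 1 = Matrix.fromBlocks (A - 1) B C (D - 1) := by
      rw [← Matrix.fromBlocks_one, sub_eq_add_neg, Matrix.fromBlocks_neg, Matrix.fromBlocks_add]
      simp [sub_eq_add_neg]
    have hfac : Matrix.fromBlocks (A - 1) B C (D - 1) =
        Matrix.fromBlocks 1 0 ((D - 1) * B⁻¹) 1 * Matrix.fromBlocks (A - 1) B W 0 := by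
      rw [Matrix.fromBlocks_multiply, Matrix.fromBlocks_inj]
      refine ⟨by simp, by simp, ?_, ?_⟩
      · rw [hC, Matrix.one_mul]; noncomm_ring
      · rw [Matrix.mul_assoc, hEB, Matrix.mul_one]; simp
    have hswap : Matrix.fromBlocks (A - 1) B W (0 : Matrix (Fin n) (Fin n) ℝ) *
        Matrix.fromBlocks (0 : Matrix (Fin n) (Fin n) ℝ) (1 : Matrix (Fin n) (Fin n) ℝ)
          (1 : Matrix (Fin n) (Fin n) ℝ) (0 : Matrix (Fin n) (Fin n) ℝ)
        = Matrix.fromBlocks B (A - 1) 0 W := by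
      rw [Matrix.fromBlocks_multiply]; simp
    have hP : (Matrix.fromBlocks (0 : Matrix (Fin n) (Fin n) ℝ) (1 : Matrix (Fin n) (Fin n) ℝ)
          (1 : Matrix (Fin n) (Fin n) ℝ) (0 : Matrix (Fin n) (Fin n) ℝ)) *
        (Matrix.fromBlocks (0 : Matrix (Fin n) (Fin n) ℝ) (1 : Matrix (Fin n) (Fin n) ℝ)
          (1 : Matrix (Fin n) (Fin n) ℝ) (0 : Matrix (Fin n) (Fin n) ℝ)) = 1 := by
      rw [Matrix.fromBlocks_multiply]; simp [Matrix.fromBlocks_one]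
    have hPdet : (Matrix.fromBlocks (0 : Matrix (Fin n) (Fin n) ℝ) (1 : Matrix (Fin n) (Fin n) ℝ)
          (1 : Matrix (Fin n) (Fin n) ℝ) (0 : Matrix (Fin n) (Fin n) ℝ)).det ≠ 0 := by
      intro h0
      have := congrArg Matrix.det hP
      rw [Matrix.det_mul, h0, Matrix.det_one] at this
      simpa using this
    have hR : (Matrix.fromBlocks (A - 1) B W (0 : Matrix (Fin n) (Fin n) ℝ)).det ≠ 0 := by
      intro h0
      apply h
      rw [hSm, hfac, Matrix.det_mul, h0, mul_zero]
    have hdetBW : (Matrix.fromBlocks (A - 1) B W (0 : Matrix (Fin n) (Fin n) ℝ)).det *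
        (Matrix.fromBlocks (0 : Matrix (Fin n) (Fin n) ℝ) (1 : Matrix (Fin n) (Fin n) ℝ)
          (1 : Matrix (Fin n) (Fin n) ℝ) (0 : Matrix (Fin n) (Fin n) ℝ)).det = B.det * W.det := by
      rw [← Matrix.det_mul, hswap, Matrix.det_fromBlocks_zero₂₁]
    have : B.det * W.det ≠ 0 := by
      rw [← hdetBW]; exact mul_ne_zero hR hPdet
    exact isUnit_iff_ne_zero.mpr fun h0 => this (by rw [h0, mul_zero])
  have hVW : W⁻¹ * W = 1 := Matrix.nonsing_inv_mul W hWu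
  have hh : ((1 : ℝ) / 2) • (1 : Matrix (Fin n) (Fin n) ℝ)
      + ((1 : ℝ) / 2) • (1 : Matrix (Fin n) (Fin n) ℝ) = 1 := by
    rw [← add_smul]; norm_num
  set M := Matrix.fromBlocks
        (B⁻¹ * (1 - A) * W⁻¹ * (1 - D) * B⁻¹ + B⁻¹) (((1 : ℝ) / 2) • 1 + B⁻¹ * (1 - A) * W⁻¹)
        (-(((1 : ℝ) / 2) • 1) - W⁻¹ * (1 - D) * B⁻¹) (-W⁻¹) with hM
  have key : M * (Matrix.fromBlocks A B C D - 1)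
      = ((1 : ℝ) / 2) • (stdJ n * (Matrix.fromBlocks A B C D + 1)) := by
    have hSm : Matrix.fromBlocks A B C D - 1 = Matrix.fromBlocks (A - 1) B C (D - 1) := by
      rw [← Matrix.fromBlocks_one, sub_eq_add_neg, Matrix.fromBlocks_neg, Matrix.fromBlocks_add]
      simp [sub_eq_add_neg]
    have hSp : Matrix.fromBlocks A B C D + 1 = Matrix.fromBlocks (A + 1) B C (D + 1) := by
      rw [← Matrix.fromBlocks_one, Matrix.fromBlocks_add, add_zero, add_zero]

    rw [hSm, hSp, hM, stdJ, Matrix.fromBlocks_multiply, Matrix.fromBlocks_multiply,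
      Matrix.fromBlocks_smul, Matrix.fromBlocks_inj]
    have e1 := cayley_aux11 A B C D B⁻¹ W W⁻¹ (((1 : ℝ) / 2) • 1) hC hVW
    have e2 := cayley_aux12 A B D B⁻¹ W⁻¹ (((1 : ℝ) / 2) • 1) hEB hh
    have e3 := cayley_aux21 A C D B⁻¹ W W⁻¹ (((1 : ℝ) / 2) • 1) hC hVW hh
    have e4 := cayley_aux22 B D B⁻¹ W⁻¹ (((1 : ℝ) / 2) • 1) hEB
    have hsmul : ∀ X : Matrix (Fin n) (Fin n) ℝ,
        (((1 : ℝ) / 2) • (1 : Matrix (Fin n) (Fin n) ℝ)) * X = ((1 : ℝ) / 2) • X := by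
      intro X; rw [Matrix.smul_mul, Matrix.one_mul]
    rw [hsmul] at e1 e2 e3 e4
    refine ⟨?_, ?_, ?_, ?_⟩
    · simpa using e1
    · simpa using e2
    · simpa using e3
    · simpa using e4
  have hdet1 : IsUnit (Matrix.fromBlocks A B C D - 1).det := isUnit_iff_ne_zero.mpr h
  calc cayley (Matrix.fromBlocks A B C D)
      = (((1 : ℝ) / 2) • (stdJ n * (Matrix.fromBlocks A B C D + 1)))
          * (Matrix.fromBlocks A B C D - 1)⁻¹ := by
        rw [cayley, Matrix.smul_mul]
    _ = M * (Matrix.fromBlocks A B C D - 1) * (Matrix.fromBlocks A B C D - 1)⁻¹ := by rw [key]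
    _ = M := Matrix.mul_nonsing_inv_cancel_right _ _ hdet1
end
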